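/- arXiv:1406.0823 — 3 statements merged into one kernel-verified Lean document; each statement's English description precedes it below -/
import Mathlib

section
/- Let n ≥ 4 be even. In every tiling of the first quadrant Q1 by 𝒯_n⁺, the even 2×2 square {0,1}×{0,1} at the corner follows the rectangular pattern: it is either a single T5 tile of the tiling, or it is contained in a 2×n or n×2 rectangle with lower-left corner at the origin that is the union of exactly two ribbon L-shaped n-omino tiles of the tiling. -/
/-- A cell of the square lattice. -/
abbrev Cell : Type := ℤ × ℤ

/-- Translate a tile by a vector. -/
def translateTile (v : Cell) (t : Set Cell) : Set Cell := (fun p => p + v) '' t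

/-- The ribbon L-shaped n-omino T1. -/
def T1 (n : ℕ) : Set Cell :=
  {p : Cell | p.1 = 0 ∧ 0 ≤ p.2 ∧ p.2 ≤ (n : ℤ) - 2} ∪ {((1 : ℤ), (0 : ℤ))}

/-- The ribbon L-shaped n-omino T2. -/
def T2 (n : ℕ) : Set Cell :=
  {p : Cell | p.1 = 1 ∧ 0 ≤ p.2 ∧ p.2 ≤ (n : ℤ) - 2} ∪ {((0 : ℤ), (n : ℤ) - 2)}

/-- The ribbon L-shaped n-omino T3. -/
def T3 (n : ℕ) : Set Cell :=
  {p : Cell | p.2 = 0 ∧ 0 ≤ p.1 ∧ p.1 ≤ (n : ℤ) - 2} ∪ {((0 : ℤ), (1 : ℤ))}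

/-- The ribbon L-shaped n-omino T4. -/
def T4 (n : ℕ) : Set Cell :=
  {p : Cell | p.2 = 1 ∧ 0 ≤ p.1 ∧ p.1 ≤ (n : ℤ) - 2} ∪ {(((n : ℤ) - 2), (0 : ℤ))}

/-- The 2×2 square tile T5. -/
def T5 : Set Cell := {p : Cell | (p.1 = 0 ∨ p.1 = 1) ∧ (p.2 = 0 ∨ p.2 = 1)}

/-- The tile set 𝒯_n = {T1, T2, T3, T4}. -/
def Tset (n : ℕ) : Set (Set Cell) := {T1 n, T2 n, T3 n, T4 n}

/-- The tile set 𝒯_n⁺ = {T1, T2, T3, T4, T5}. -/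
def TsetPlus (n : ℕ) : Set (Set Cell) := Tset n ∪ {T5}

/-- A tiling of a region `R` by translates of tiles from `𝒯`:
a family of pairwise disjoint translates of tiles from `𝒯` whose union is `R`. -/
def IsTiling (𝒯 : Set (Set Cell)) (R : Set Cell) (tiling : Set (Set Cell)) : Prop :=
  (∀ P ∈ tiling, ∃ t ∈ 𝒯, ∃ v : Cell, P = translateTile v t) ∧
  (∀ P ∈ tiling, ∀ Q ∈ tiling, P ≠ Q → Disjoint P Q) ∧
  ⋃₀ tiling = R

/-- The a×b rectangle (height a, base b) with lower-left corner v. -/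
def rect (a b : ℕ) (v : Cell) : Set Cell :=
  {p : Cell | v.1 ≤ p.1 ∧ p.1 < v.1 + (b : ℤ) ∧ v.2 ≤ p.2 ∧ p.2 < v.2 + (a : ℤ)}

/-- A lattice point with both coordinates even. -/
def EvenPt (v : Cell) : Prop := Even v.1 ∧ Even v.2

/-- `P` is a translate of one of the four ribbon L-shaped n-ominoes. -/
def IsRibbonL (n : ℕ) (P : Set Cell) : Prop :=
  ∃ v : Cell,
    P = translateTile v (T1 n) ∨ P = translateTile v (T2 n) ∨
    P = translateTile v (T3 n) ∨ P = translateTile v (T4 n)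

/-- `P` is the union of exactly two ribbon L-shaped n-omino tiles of the tiling. -/
def TwoLRect (n : ℕ) (tiling : Set (Set Cell)) (P : Set Cell) : Prop :=
  ∃ A ∈ tiling, ∃ B ∈ tiling,
    A ≠ B ∧ IsRibbonL n A ∧ IsRibbonL n B ∧ P = A ∪ B

/-- The first quadrant. -/
def Q1 : Set Cell := {p : Cell | 0 ≤ p.1 ∧ 0 ≤ p.2}

lemma mem_translate' {x y a b : ℤ} {t : Set Cell} :
    ((x, y) : Cell) ∈ translateTile (a, b) t ↔ ((x - a, y - b) : Cell) ∈ t := by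
  constructor
  · rintro ⟨⟨u, w⟩, hq, heq⟩
    rw [Prod.ext_iff] at heq
    simp only [Prod.fst_add, Prod.snd_add] at heq
    have : ((x - a, y - b) : Cell) = (u, w) := by
      rw [Prod.ext_iff]; simp; omega
    rw [this]; exact hq
  · intro h
    exact ⟨(x - a, y - b), h, by rw [Prod.ext_iff]; simp⟩

lemma mem_T1 {n : ℕ} {x y : ℤ} :
    ((x, y) : Cell) ∈ T1 n ↔ (x = 0 ∧ 0 ≤ y ∧ y ≤ (n : ℤ) - 2) ∨ (x = 1 ∧ y = 0) := by
  simp [T1, Prod.ext_iff]; tauto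
lemma mem_T2 {n : ℕ} {x y : ℤ} :
    ((x, y) : Cell) ∈ T2 n ↔ (x = 1 ∧ 0 ≤ y ∧ y ≤ (n : ℤ) - 2) ∨ (x = 0 ∧ y = (n : ℤ) - 2) := by
  simp [T2, Prod.ext_iff]; tauto
lemma mem_T3 {n : ℕ} {x y : ℤ} :
    ((x, y) : Cell) ∈ T3 n ↔ (y = 0 ∧ 0 ≤ x ∧ x ≤ (n : ℤ) - 2) ∨ (x = 0 ∧ y = 1) := by
  simp [T3, Prod.ext_iff]; tauto
lemma mem_T4 {n : ℕ} {x y : ℤ} :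
    ((x, y) : Cell) ∈ T4 n ↔ (y = 1 ∧ 0 ≤ x ∧ x ≤ (n : ℤ) - 2) ∨ (x = (n : ℤ) - 2 ∧ y = 0) := by
  simp [T4, Prod.ext_iff]; tauto
lemma mem_T5 {x y : ℤ} :
    ((x, y) : Cell) ∈ T5 ↔ (x = 0 ∨ x = 1) ∧ (y = 0 ∨ y = 1) := by
  simp [T5]
lemma mem_rect {a b : ℕ} {c d x y : ℤ} :
    ((x, y) : Cell) ∈ rect a b (c, d) ↔ c ≤ x ∧ x < c + (b : ℤ) ∧ d ≤ y ∧ y < d + (a : ℤ) := by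
  simp [rect]

lemma transZero (t : Set Cell) : translateTile ((0 : ℤ), (0 : ℤ)) t = t := by
  ext ⟨x, y⟩
  rw [mem_translate']
  norm_num

lemma subQ1 {t : Set Cell} {a b : ℤ} (hQ : translateTile (a, b) t ⊆ Q1)
    {x y : ℤ} (hc : ((x, y) : Cell) ∈ t) : 0 ≤ x + a ∧ 0 ≤ y + b := by
  have := hQ ⟨(x, y), hc, rfl⟩
  simpa [Q1] using this

lemma tile_cases {n : ℕ} {t : Set Cell} (ht : t ∈ TsetPlus n) :
    t = T1 n ∨ t = T2 n ∨ t = T3 n ∨ t = T4 n ∨ t = T5 := by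
  simp [TsetPlus, Tset] at ht
  tauto

/-- Lemma A: a tile translate inside Q1 containing (2,0) contains (1,0) or (2,1). -/
lemma lemA {n : ℕ} (hn4 : 4 ≤ n) {t : Set Cell} (ht : t ∈ TsetPlus n) {a b : ℤ}
    (hQ : translateTile (a, b) t ⊆ Q1)
    (h : ((2 : ℤ), (0 : ℤ)) ∈ translateTile (a, b) t) :
    ((1 : ℤ), (0 : ℤ)) ∈ translateTile (a, b) t ∨
    ((2 : ℤ), (1 : ℤ)) ∈ translateTile (a, b) t := by
  rcases tile_cases ht with rfl | rfl | rfl | rfl | rfl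
  · have q1 := subQ1 hQ (x := 0) (y := 0) (by rw [mem_T1]; omega)
    have q2 := subQ1 hQ (x := 1) (y := 0) (by rw [mem_T1]; omega)
    simp only [mem_translate', mem_T1] at h ⊢
    omega
  · have q1 := subQ1 hQ (x := 1) (y := 0) (by rw [mem_T2]; omega)
    have q2 := subQ1 hQ (x := 0) (y := (n : ℤ) - 2) (by rw [mem_T2]; omega)
    simp only [mem_translate', mem_T2] at h ⊢
    omega
  · have q1 := subQ1 hQ (x := 0) (y := 0) (by rw [mem_T3]; omega)
    have q2 := subQ1 hQ (x := 0) (y := 1) (by rw [mem_T3]; omega)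
    simp only [mem_translate', mem_T3] at h ⊢
    omega
  · have q1 := subQ1 hQ (x := 0) (y := 1) (by rw [mem_T4]; omega)
    have q2 := subQ1 hQ (x := (n : ℤ) - 2) (y := 0) (by rw [mem_T4]; omega)
    simp only [mem_translate', mem_T4] at h ⊢
    omega
  · have q1 := subQ1 hQ (x := 0) (y := 0) (by rw [mem_T5]; omega)
    simp only [mem_translate', mem_T5] at h ⊢
    omega

/-- Lemma A': a tile translate inside Q1 containing (0,2) contains (0,1) or (1,2). -/
lemma lemA' {n : ℕ} (hn4 : 4 ≤ n) {t : Set Cell} (ht : t ∈ TsetPlus n) {a b : ℤ}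
    (hQ : translateTile (a, b) t ⊆ Q1)
    (h : ((0 : ℤ), (2 : ℤ)) ∈ translateTile (a, b) t) :
    ((0 : ℤ), (1 : ℤ)) ∈ translateTile (a, b) t ∨
    ((1 : ℤ), (2 : ℤ)) ∈ translateTile (a, b) t := by
  rcases tile_cases ht with rfl | rfl | rfl | rfl | rfl
  · have q1 := subQ1 hQ (x := 0) (y := 0) (by rw [mem_T1]; omega)
    have q2 := subQ1 hQ (x := 1) (y := 0) (by rw [mem_T1]; omega)
    simp only [mem_translate', mem_T1] at h ⊢
    omega
  · have q1 := subQ1 hQ (x := 1) (y := 0) (by rw [mem_T2]; omega)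
    have q2 := subQ1 hQ (x := 0) (y := (n : ℤ) - 2) (by rw [mem_T2]; omega)
    simp only [mem_translate', mem_T2] at h ⊢
    omega
  · have q1 := subQ1 hQ (x := 0) (y := 0) (by rw [mem_T3]; omega)
    have q2 := subQ1 hQ (x := 0) (y := 1) (by rw [mem_T3]; omega)
    simp only [mem_translate', mem_T3] at h ⊢
    omega
  · have q1 := subQ1 hQ (x := 0) (y := 1) (by rw [mem_T4]; omega)
    have q2 := subQ1 hQ (x := (n : ℤ) - 2) (y := 0) (by rw [mem_T4]; omega)
    simp only [mem_translate', mem_T4] at h ⊢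
    omega
  · have q1 := subQ1 hQ (x := 0) (y := 0) (by rw [mem_T5]; omega)
    simp only [mem_translate', mem_T5] at h ⊢
    omega

/-- Lemma 0: the tile at the origin is T1, T3 or T5 (untranslated). -/
lemma lem0 {n : ℕ} (hn4 : 4 ≤ n) {t : Set Cell} (ht : t ∈ TsetPlus n) {a b : ℤ}
    (hQ : translateTile (a, b) t ⊆ Q1)
    (h : ((0 : ℤ), (0 : ℤ)) ∈ translateTile (a, b) t) :
    translateTile (a, b) t = T1 n ∨ translateTile (a, b) t = T3 n ∨
    translateTile (a, b) t = T5 := by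
  rcases tile_cases ht with rfl | rfl | rfl | rfl | rfl
  · have q1 := subQ1 hQ (x := 0) (y := 0) (by rw [mem_T1]; omega)
    have q2 := subQ1 hQ (x := 1) (y := 0) (by rw [mem_T1]; omega)
    rw [mem_translate', mem_T1] at h
    have hab : a = 0 ∧ b = 0 := by omega
    obtain ⟨rfl, rfl⟩ := hab
    exact Or.inl (transZero _)
  · exfalso
    have q1 := subQ1 hQ (x := 1) (y := 0) (by rw [mem_T2]; omega)
    have q2 := subQ1 hQ (x := 0) (y := (n : ℤ) - 2) (by rw [mem_T2]; omega)
    rw [mem_translate', mem_T2] at h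
    omega
  · have q1 := subQ1 hQ (x := 0) (y := 0) (by rw [mem_T3]; omega)
    have q2 := subQ1 hQ (x := 0) (y := 1) (by rw [mem_T3]; omega)
    rw [mem_translate', mem_T3] at h
    have hab : a = 0 ∧ b = 0 := by omega
    obtain ⟨rfl, rfl⟩ := hab
    exact Or.inr (Or.inl (transZero _))
  · exfalso
    have q1 := subQ1 hQ (x := 0) (y := 1) (by rw [mem_T4]; omega)
    have q2 := subQ1 hQ (x := (n : ℤ) - 2) (y := 0) (by rw [mem_T4]; omega)
    rw [mem_translate', mem_T4] at h
    omega
  · have q1 := subQ1 hQ (x := 0) (y := 0) (by rw [mem_T5]; omega)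
    rw [mem_translate', mem_T5] at h
    have hab : a = 0 ∧ b = 0 := by omega
    obtain ⟨rfl, rfl⟩ := hab
    exact Or.inr (Or.inr (transZero _))

/-- Lemma B: a tile inside Q1 containing (1,1) and disjoint from T1 is the
T2-translate completing the n×2 rectangle, or it contains (2,1) but not (2,0). -/
lemma lemB {n : ℕ} (hn4 : 4 ≤ n) {t : Set Cell} (ht : t ∈ TsetPlus n) {a b : ℤ}
    (hQ : translateTile (a, b) t ⊆ Q1)
    (h : ((1 : ℤ), (1 : ℤ)) ∈ translateTile (a, b) t)
    (hd : ∀ p ∈ translateTile (a, b) t, p ∉ T1 n) :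
    translateTile (a, b) t = translateTile ((0 : ℤ), (1 : ℤ)) (T2 n) ∨
    (((2 : ℤ), (1 : ℤ)) ∈ translateTile (a, b) t ∧
      ((2 : ℤ), (0 : ℤ)) ∉ translateTile (a, b) t) := by
  have d1 : ((1 : ℤ), (0 : ℤ)) ∉ translateTile (a, b) t :=
    fun hm => hd _ hm (by rw [mem_T1]; omega)
  have d2 : ((0 : ℤ), (1 : ℤ)) ∉ translateTile (a, b) t :=
    fun hm => hd _ hm (by rw [mem_T1]; omega)
  have d3 : ((0 : ℤ), (0 : ℤ)) ∉ translateTile (a, b) t :=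
    fun hm => hd _ hm (by rw [mem_T1]; omega)
  rcases tile_cases ht with rfl | rfl | rfl | rfl | rfl
  · right
    have q1 := subQ1 hQ (x := 0) (y := 0) (by rw [mem_T1]; omega)
    have q2 := subQ1 hQ (x := 1) (y := 0) (by rw [mem_T1]; omega)
    simp only [mem_translate', mem_T1] at h d1 d2 d3 ⊢
    omega
  · left
    have q1 := subQ1 hQ (x := 1) (y := 0) (by rw [mem_T2]; omega)
    have q2 := subQ1 hQ (x := 0) (y := (n : ℤ) - 2) (by rw [mem_T2]; omega)
    rw [mem_translate', mem_T2] at h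
    rw [mem_translate', mem_T2] at d1
    have hab : a = 0 ∧ b = 1 := by omega
    obtain ⟨rfl, rfl⟩ := hab
    rfl
  · right
    have q1 := subQ1 hQ (x := 0) (y := 0) (by rw [mem_T3]; omega)
    have q2 := subQ1 hQ (x := 0) (y := 1) (by rw [mem_T3]; omega)
    simp only [mem_translate', mem_T3] at h d1 d2 d3 ⊢
    omega
  · right
    have q1 := subQ1 hQ (x := 0) (y := 1) (by rw [mem_T4]; omega)
    have q2 := subQ1 hQ (x := (n : ℤ) - 2) (y := 0) (by rw [mem_T4]; omega)
    simp only [mem_translate', mem_T4] at h d1 d2 d3 ⊢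
    omega
  · right
    have q1 := subQ1 hQ (x := 0) (y := 0) (by rw [mem_T5]; omega)
    simp only [mem_translate', mem_T5] at h d1 d2 d3 ⊢
    omega

/-- Lemma B': a tile inside Q1 containing (1,1) and disjoint from T3 is the
T4-translate completing the 2×n rectangle, or it contains (1,2) but not (0,2). -/
lemma lemB' {n : ℕ} (hn4 : 4 ≤ n) {t : Set Cell} (ht : t ∈ TsetPlus n) {a b : ℤ}
    (hQ : translateTile (a, b) t ⊆ Q1)
    (h : ((1 : ℤ), (1 : ℤ)) ∈ translateTile (a, b) t)
    (hd : ∀ p ∈ translateTile (a, b) t, p ∉ T3 n) :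
    translateTile (a, b) t = translateTile ((1 : ℤ), (0 : ℤ)) (T4 n) ∨
    (((1 : ℤ), (2 : ℤ)) ∈ translateTile (a, b) t ∧
      ((0 : ℤ), (2 : ℤ)) ∉ translateTile (a, b) t) := by
  have d1 : ((1 : ℤ), (0 : ℤ)) ∉ translateTile (a, b) t :=
    fun hm => hd _ hm (by rw [mem_T3]; omega)
  have d2 : ((0 : ℤ), (1 : ℤ)) ∉ translateTile (a, b) t :=
    fun hm => hd _ hm (by rw [mem_T3]; omega)
  have d3 : ((0 : ℤ), (0 : ℤ)) ∉ translateTile (a, b) t :=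
    fun hm => hd _ hm (by rw [mem_T3]; omega)
  rcases tile_cases ht with rfl | rfl | rfl | rfl | rfl
  · right
    have q1 := subQ1 hQ (x := 0) (y := 0) (by rw [mem_T1]; omega)
    have q2 := subQ1 hQ (x := 1) (y := 0) (by rw [mem_T1]; omega)
    simp only [mem_translate', mem_T1] at h d1 d2 d3 ⊢
    omega
  · right
    have q1 := subQ1 hQ (x := 1) (y := 0) (by rw [mem_T2]; omega)
    have q2 := subQ1 hQ (x := 0) (y := (n : ℤ) - 2) (by rw [mem_T2]; omega)
    simp only [mem_translate', mem_T2] at h d1 d2 d3 ⊢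
    omega
  · right
    have q1 := subQ1 hQ (x := 0) (y := 0) (by rw [mem_T3]; omega)
    have q2 := subQ1 hQ (x := 0) (y := 1) (by rw [mem_T3]; omega)
    simp only [mem_translate', mem_T3] at h d1 d2 d3 ⊢
    omega
  · left
    have q1 := subQ1 hQ (x := 0) (y := 1) (by rw [mem_T4]; omega)
    have q2 := subQ1 hQ (x := (n : ℤ) - 2) (y := 0) (by rw [mem_T4]; omega)
    rw [mem_translate', mem_T4] at h
    rw [mem_translate', mem_T4] at d2
    have hab : a = 1 ∧ b = 0 := by omega
    obtain ⟨rfl, rfl⟩ := hab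
    rfl
  · right
    have q1 := subQ1 hQ (x := 0) (y := 0) (by rw [mem_T5]; omega)
    simp only [mem_translate', mem_T5] at h d1 d2 d3 ⊢
    omega

lemma rect22_eq : rect 2 2 ((0 : ℤ), (0 : ℤ)) = T5 := by
  ext ⟨x, y⟩
  rw [mem_rect, mem_T5]
  omega

lemma rectn2_eq {n : ℕ} (hn4 : 4 ≤ n) :
    rect n 2 ((0 : ℤ), (0 : ℤ)) = T1 n ∪ translateTile ((0 : ℤ), (1 : ℤ)) (T2 n) := by
  ext ⟨x, y⟩
  rw [Set.mem_union, mem_rect, mem_T1, mem_translate', mem_T2]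
  omega

lemma rect2n_eq {n : ℕ} (hn4 : 4 ≤ n) :
    rect 2 n ((0 : ℤ), (0 : ℤ)) = T3 n ∪ translateTile ((1 : ℤ), (0 : ℤ)) (T4 n) := by
  ext ⟨x, y⟩
  rw [Set.mem_union, mem_rect, mem_T3, mem_translate', mem_T4]
  omega


/-- In every tiling of the first quadrant by 𝒯_n⁺, the corner 2×2 square
follows the rectangular pattern: it is a single T5 tile of the tiling, or it is
contained in a 2×n or n×2 rectangle with lower-left corner at the origin that
is the union of exactly two ribbon L-shaped n-omino tiles of the tiling. -/
theorem corner_square_follows_rect_pattern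
    (n : ℕ) (hn4 : 4 ≤ n) (hn : Even n)
    (tiling : Set (Set Cell)) (ht : IsTiling (TsetPlus n) Q1 tiling) :
    rect 2 2 ((0 : ℤ), (0 : ℤ)) ∈ tiling ∨
    ∃ P : Set Cell,
      (P = rect 2 n ((0 : ℤ), (0 : ℤ)) ∨ P = rect n 2 ((0 : ℤ), (0 : ℤ))) ∧
      TwoLRect n tiling P := by
  obtain ⟨hshape, hdisj, hcover⟩ := ht
  have hsub : ∀ P ∈ tiling, P ⊆ Q1 := fun P hP => hcover ▸ Set.subset_sUnion_of_mem hP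
  -- the tile at the origin
  have h00 : ((0 : ℤ), (0 : ℤ)) ∈ ⋃₀ tiling := by rw [hcover]; simp [Q1]
  obtain ⟨P0, hP0, h0mem⟩ := h00
  obtain ⟨t0, ht0, ⟨a0, b0⟩, rfl⟩ := hshape P0 hP0
  rcases lem0 hn4 ht0 (hsub _ hP0) h0mem with hE | hE | hE
  · -- corner tile is T1 n : the n×2 rectangle case
    right
    rw [hE] at hP0
    -- the tile covering (1,1)
    have h11 : ((1 : ℤ), (1 : ℤ)) ∈ ⋃₀ tiling := by rw [hcover]; simp [Q1]
    obtain ⟨D, hD, h11mem⟩ := h11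
    obtain ⟨t1, ht1, ⟨a1, b1⟩, rfl⟩ := hshape D hD
    have hne : translateTile ((a1 : ℤ), (b1 : ℤ)) t1 ≠ T1 n := by
      intro hEq
      rw [hEq, mem_T1] at h11mem
      omega
    have hdisjD : ∀ p ∈ translateTile ((a1 : ℤ), (b1 : ℤ)) t1, p ∉ T1 n := fun p hp =>
      Set.disjoint_left.mp (hdisj _ hD _ hP0 hne) hp
    rcases lemB hn4 ht1 (hsub _ hD) h11mem hdisjD with hDeq | ⟨h21, h20n⟩
    · -- the rectangle PATTERN holds
      refine ⟨rect n 2 ((0 : ℤ), (0 : ℤ)), Or.inr rfl,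
        T1 n, hP0, translateTile ((0 : ℤ), (1 : ℤ)) (T2 n), hDeq ▸ hD, ?_, ?_, ?_, ?_⟩
      · intro hEq
        have hm : ((1 : ℤ), (0 : ℤ)) ∈ T1 n := by rw [mem_T1]; omega
        rw [hEq, mem_translate', mem_T2] at hm
        omega
      · exact ⟨((0 : ℤ), (0 : ℤ)), Or.inl (transZero _).symm⟩
      · exact ⟨((0 : ℤ), (1 : ℤ)), Or.inr (Or.inl rfl)⟩
      · exact rectn2_eq hn4
    · -- contradiction via the cell (2,0)
      exfalso
      have h20 : ((2 : ℤ), (0 : ℤ)) ∈ ⋃₀ tiling := by rw [hcover]; simp [Q1]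
      obtain ⟨C, hC, h20mem⟩ := h20
      obtain ⟨t2, ht2, ⟨a2, b2⟩, rfl⟩ := hshape C hC
      have hCne1 : translateTile ((a2 : ℤ), (b2 : ℤ)) t2 ≠ T1 n := by
        intro hEq
        rw [hEq, mem_T1] at h20mem
        omega
      have hCneD : translateTile ((a2 : ℤ), (b2 : ℤ)) t2 ≠
          translateTile ((a1 : ℤ), (b1 : ℤ)) t1 := by
        intro hEq
        exact h20n (hEq ▸ h20mem)
      rcases lemA hn4 ht2 (hsub _ hC) h20mem with hm | hm
      · exact Set.disjoint_left.mp (hdisj _ hC _ hP0 hCne1) hm (by rw [mem_T1]; omega)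
      · exact Set.disjoint_left.mp (hdisj _ hC _ hD hCneD) hm h21
  · -- corner tile is T3 n : the 2×n rectangle case
    right
    rw [hE] at hP0
    have h11 : ((1 : ℤ), (1 : ℤ)) ∈ ⋃₀ tiling := by rw [hcover]; simp [Q1]
    obtain ⟨D, hD, h11mem⟩ := h11
    obtain ⟨t1, ht1, ⟨a1, b1⟩, rfl⟩ := hshape D hD
    have hne : translateTile ((a1 : ℤ), (b1 : ℤ)) t1 ≠ T3 n := by
      intro hEq
      rw [hEq, mem_T3] at h11mem
      omega
    have hdisjD : ∀ p ∈ translateTile ((a1 : ℤ), (b1 : ℤ)) t1, p ∉ T3 n := fun p hp =>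
      Set.disjoint_left.mp (hdisj _ hD _ hP0 hne) hp
    rcases lemB' hn4 ht1 (hsub _ hD) h11mem hdisjD with hDeq | ⟨h12, h02n⟩
    · refine ⟨rect 2 n ((0 : ℤ), (0 : ℤ)), Or.inl rfl,
        T3 n, hP0, translateTile ((1 : ℤ), (0 : ℤ)) (T4 n), hDeq ▸ hD, ?_, ?_, ?_, ?_⟩
      · intro hEq
        have hm : ((0 : ℤ), (1 : ℤ)) ∈ T3 n := by rw [mem_T3]; omega
        rw [hEq, mem_translate', mem_T4] at hm
        omega
      · exact ⟨((0 : ℤ), (0 : ℤ)), Or.inr (Or.inr (Or.inl (transZero _).symm))⟩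
      · exact ⟨((1 : ℤ), (0 : ℤ)), Or.inr (Or.inr (Or.inr rfl))⟩
      · exact rect2n_eq hn4
    · exfalso
      have h02 : ((0 : ℤ), (2 : ℤ)) ∈ ⋃₀ tiling := by rw [hcover]; simp [Q1]
      obtain ⟨C, hC, h02mem⟩ := h02
      obtain ⟨t2, ht2, ⟨a2, b2⟩, rfl⟩ := hshape C hC
      have hCne1 : translateTile ((a2 : ℤ), (b2 : ℤ)) t2 ≠ T3 n := by
        intro hEq
        rw [hEq, mem_T3] at h02mem
        omega
      have hCneD : translateTile ((a2 : ℤ), (b2 : ℤ)) t2 ≠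
          translateTile ((a1 : ℤ), (b1 : ℤ)) t1 := by
        intro hEq
        exact h02n (hEq ▸ h02mem)
      rcases lemA' hn4 ht2 (hsub _ hC) h02mem with hm | hm
      · exact Set.disjoint_left.mp (hdisj _ hC _ hP0 hCne1) hm (by rw [mem_T3]; omega)
      · exact Set.disjoint_left.mp (hdisj _ hC _ hD hCneD) hm h12
  · -- corner tile is the 2×2 square
    left
    rw [rect22_eq, ← hE]
    exact hP0
end

section
/- Let n ≥ 3 be odd. The 3n×(3n+1) rectangle (height 3n, base 3n+1) can be tiled by 𝒯_n = {T1, T2, T3, T4}. -/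
lemma mem_translate {v p : Cell} {t : Set Cell} :
    p ∈ translateTile v t ↔ (p.1 - v.1, p.2 - v.2) ∈ t := by
  constructor
  · rintro ⟨q, hq, rfl⟩
    simpa using hq
  · intro h
    exact ⟨_, h, by simp [Prod.ext_iff]⟩

lemma mem_t1 {n : ℕ} {x y : ℤ} {p : Cell} :
    p ∈ translateTile (x, y) (T1 n) ↔
      ((p.1 = x ∧ y ≤ p.2 ∧ p.2 ≤ y + (n : ℤ) - 2) ∨ (p.1 = x + 1 ∧ p.2 = y)) := by
  rw [mem_translate]
  simp only [T1, Set.mem_union, Set.mem_setOf_eq, Set.mem_singleton_iff, Prod.ext_iff]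
  constructor <;> intro h <;> omega

lemma mem_t2 {n : ℕ} {x y : ℤ} {p : Cell} :
    p ∈ translateTile (x, y) (T2 n) ↔
      ((p.1 = x + 1 ∧ y ≤ p.2 ∧ p.2 ≤ y + (n : ℤ) - 2) ∨ (p.1 = x ∧ p.2 = y + (n : ℤ) - 2)) := by
  rw [mem_translate]
  simp only [T2, Set.mem_union, Set.mem_setOf_eq, Set.mem_singleton_iff, Prod.ext_iff]
  constructor <;> intro h <;> omega

/-- The explicit tiling of the 3n×(3n+1) rectangle by vertical 2×n blocks. -/
def myTiling (n : ℕ) : Set (Set Cell) :=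
  {P | ∃ i j : ℤ, 0 ≤ i ∧ 2 * i ≤ 3 * (n : ℤ) - 1 ∧ 0 ≤ j ∧ j ≤ 2 ∧
      (P = translateTile (2 * i, j * (n : ℤ)) (T1 n) ∨
       P = translateTile (2 * i, j * (n : ℤ) + 1) (T2 n))}

/-- For n odd, the 3n×(3n+1) rectangle can be tiled by 𝒯_n. -/
theorem odd_n_rectangle_tileable
    (n : ℕ) (hn3 : 3 ≤ n) (hn : Odd n) :
    ∃ tiling : Set (Set Cell),
      IsTiling (Tset n) (rect (3 * n) (3 * n + 1) ((0 : ℤ), (0 : ℤ))) tiling := by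
  obtain ⟨m, hm⟩ := hn
  refine ⟨myTiling n, ?_, ?_, ?_⟩
  · rintro P ⟨i, j, hi0, hi1, hj0, hj1, hP | hP⟩
    · exact ⟨T1 n, by simp [Tset], _, hP⟩
    · exact ⟨T2 n, by simp [Tset], _, hP⟩
  · rintro P ⟨i, j, hi0, hi1, hj0, hj1, hP⟩ Q ⟨i', j', hi0', hi1', hj0', hj1', hQ⟩ hne
    rw [Set.disjoint_left]
    intro p hpP hpQ
    rcases hP with rfl | rfl <;> rcases hQ with rfl | rfl <;>
      simp only [mem_t1, mem_t2] at hpP hpQ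
    · have : i = i' ∧ j = j' := by
        interval_cases j <;> interval_cases j' <;> omega
      obtain ⟨rfl, rfl⟩ := this
      exact hne rfl
    · interval_cases j <;> interval_cases j' <;> omega
    · interval_cases j <;> interval_cases j' <;> omega
    · have : i = i' ∧ j = j' := by
        interval_cases j <;> interval_cases j' <;> omega
      obtain ⟨rfl, rfl⟩ := this
      exact hne rfl
  · ext p
    simp only [Set.mem_sUnion, myTiling, Set.mem_setOf_eq, rect]
    constructor
    · rintro ⟨P, ⟨i, j, hi0, hi1, hj0, hj1, hP | hP⟩, hp⟩ <;> subst hP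
      · rw [mem_t1] at hp
        interval_cases j <;> omega
      · rw [mem_t2] at hp
        interval_cases j <;> omega
    · rintro ⟨h1, h2, h3, h4⟩
      set i := p.1 / 2 with hi
      have hii : p.1 = 2 * i ∨ p.1 = 2 * i + 1 := by omega
      have hib : 0 ≤ i ∧ 2 * i ≤ 3 * (n : ℤ) - 1 := by omega
      have hj : ∃ j : ℤ, 0 ≤ j ∧ j ≤ 2 ∧ j * n ≤ p.2 ∧ p.2 ≤ j * n + n - 1 := by
        by_cases c1 : p.2 < (n : ℤ)
        · exact ⟨0, by omega, by omega, by simp; omega, by simp; omega⟩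
        · by_cases c2 : p.2 < 2 * (n : ℤ)
          · exact ⟨1, by omega, by omega, by omega, by omega⟩
          · exact ⟨2, by omega, by omega, by omega, by omega⟩
      obtain ⟨j, hj0, hj1, hj2, hj3⟩ := hj
      rcases hii with h | h
      · by_cases hc : p.2 ≤ j * n + n - 2
        · exact ⟨_, ⟨i, j, hib.1, hib.2, hj0, hj1, Or.inl rfl⟩, mem_t1.2 (Or.inl ⟨h, hj2, by omega⟩)⟩
        · exact ⟨_, ⟨i, j, hib.1, hib.2, hj0, hj1, Or.inr rfl⟩, mem_t2.2 (Or.inr ⟨h, by omega⟩)⟩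
      · by_cases hc : p.2 = j * n
        · exact ⟨_, ⟨i, j, hib.1, hib.2, hj0, hj1, Or.inl rfl⟩, mem_t1.2 (Or.inr ⟨h, hc⟩)⟩
        · exact ⟨_, ⟨i, j, hib.1, hib.2, hj0, hj1, Or.inr rfl⟩, mem_t2.2 (Or.inl ⟨h, by omega, by omega⟩)⟩
end

section
/- Let n ≥ 4 be even. There exists a tiling of the second quadrant {(x,y) ∈ ℤ×ℤ : x ≤ −1, y ≥ 0} by 𝒯_n = {T1, T2, T3, T4} that does not follow the rectangular pattern. In particular, the rigidity of tilings of the first quadrant by 𝒯_n does not persist under reflection of the tiled region about the vertical axis. -/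
/-- A tiling by 𝒯_n follows the rectangular pattern on region `R`:
`R` is partitioned into 2×n and n×2 rectangles with all corners at even
coordinates, each the union of exactly two ribbon L-shaped n-omino tiles. -/
def FollowsRectPattern (n : ℕ) (tiling : Set (Set Cell)) (R : Set Cell) : Prop :=
  ∃ parts : Set (Set Cell),
    (∀ P ∈ parts, ∀ Q ∈ parts, P ≠ Q → Disjoint P Q) ∧
    ⋃₀ parts = R ∧
    ∀ P ∈ parts, ∃ v : Cell, EvenPt v ∧
      (P = rect 2 n v ∨ P = rect n 2 v) ∧ TwoLRect n tiling P


lemma mem_translateTile {t : Set Cell} {v p : Cell} :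
    p ∈ translateTile v t ↔ (p.1 - v.1, p.2 - v.2) ∈ t := by
  constructor
  · rintro ⟨a, ha, rfl⟩
    simpa using ha
  · intro h
    exact ⟨(p.1 - v.1, p.2 - v.2), h, by simp [Prod.ext_iff]⟩

lemma mem_tT1 {n : ℕ} {v p : Cell} :
    p ∈ translateTile v (T1 n) ↔
      (p.1 = v.1 ∧ v.2 ≤ p.2 ∧ p.2 ≤ v.2 + ((n:ℤ) - 2)) ∨ (p.1 = v.1 + 1 ∧ p.2 = v.2) := by
  rw [mem_translateTile]
  simp only [T1, Set.mem_union, Set.mem_setOf_eq, Set.mem_singleton_iff, Prod.mk.injEq]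
  omega

lemma mem_tT2 {n : ℕ} {v p : Cell} :
    p ∈ translateTile v (T2 n) ↔
      (p.1 = v.1 + 1 ∧ v.2 ≤ p.2 ∧ p.2 ≤ v.2 + ((n:ℤ) - 2)) ∨
        (p.1 = v.1 ∧ p.2 = v.2 + ((n:ℤ) - 2)) := by
  rw [mem_translateTile]
  simp only [T2, Set.mem_union, Set.mem_setOf_eq, Set.mem_singleton_iff, Prod.mk.injEq]
  omega

lemma mem_tT3 {n : ℕ} {v p : Cell} :
    p ∈ translateTile v (T3 n) ↔
      (p.2 = v.2 ∧ v.1 ≤ p.1 ∧ p.1 ≤ v.1 + ((n:ℤ) - 2)) ∨ (p.1 = v.1 ∧ p.2 = v.2 + 1) := by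
  rw [mem_translateTile]
  simp only [T3, Set.mem_union, Set.mem_setOf_eq, Set.mem_singleton_iff, Prod.mk.injEq]
  omega

lemma mem_tT4 {n : ℕ} {v p : Cell} :
    p ∈ translateTile v (T4 n) ↔
      (p.2 = v.2 + 1 ∧ v.1 ≤ p.1 ∧ p.1 ≤ v.1 + ((n:ℤ) - 2)) ∨
        (p.1 = v.1 + ((n:ℤ) - 2) ∧ p.2 = v.2) := by
  rw [mem_translateTile]
  simp only [T4, Set.mem_union, Set.mem_setOf_eq, Set.mem_singleton_iff, Prod.mk.injEq]
  omega

lemma sqt_euclid {D q r : ℤ} (hD : 0 < D) (h0 : 0 ≤ r) (h1 : r < D) :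
    (D*q + r) / D = q ∧ (D*q + r) % D = r := by
  constructor
  · rw [add_comm, Int.add_mul_ediv_left r q hD.ne', Int.ediv_eq_zero_of_lt h0 h1, zero_add]
  · rw [add_comm, Int.add_mul_emod_self_left, Int.emod_eq_of_lt h0 h1]
def eOf (n : ℕ) (c : Cell) : ℤ := -2*((n:ℤ)-2)*(c.2/2) - 1
def mOf (n : ℕ) (c : Cell) : ℤ := (eOf n c + 1 - (n:ℤ) - c.1) / (n:ℤ)
def x0Of (n : ℕ) (c : Cell) : ℤ := eOf n c - (n:ℤ) + 2 - (n:ℤ)*(mOf n c + 1)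
def kOf (n : ℕ) (c : Cell) : ℤ := (-c.1 - 1) / ((n:ℤ) - 2)
def pOf (n : ℕ) (c : Cell) : ℤ := ((-c.1 - 1) % ((n:ℤ) - 2)) / 2
def aOf (n : ℕ) (c : Cell) : ℤ := -((n:ℤ)-2) * kOf n c - 2*(pOf n c + 1)
def qOf (n : ℕ) (c : Cell) : ℤ := (c.2 - (kOf n c + 1)) / (n:ℤ)
def YOf (n : ℕ) (c : Cell) : ℤ := kOf n c + 1 + (n:ℤ) * qOf n c
def sOf (n : ℕ) (c : Cell) : ℤ := (c.2 - (kOf n c + 1)) % (n:ℤ)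

def cellTile (n : ℕ) (c : Cell) : Set Cell :=
  if c.1 + ((n:ℤ)-2)*c.2 ≤ -1 then
    if eOf n c - (n:ℤ) + 2 ≤ c.1 then
      translateTile (eOf n c - (n:ℤ) + 2, 2*(c.2/2)) (T3 n)
    else if c.2 % 2 = 0 then
      if c.1 = x0Of n c + (n:ℤ) - 1 then translateTile (x0Of n c + 1, 2*(c.2/2)) (T4 n)
      else translateTile (x0Of n c, 2*(c.2/2)) (T3 n)
    else
      if c.1 = x0Of n c then translateTile (x0Of n c, 2*(c.2/2)) (T3 n)
      else translateTile (x0Of n c + 1, 2*(c.2/2)) (T4 n)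
  else
    if c.1 = aOf n c then
      if sOf n c = (n:ℤ) - 1 then translateTile (aOf n c, YOf n c + 1) (T2 n)
      else translateTile (aOf n c, YOf n c) (T1 n)
    else
      if sOf n c = 0 then translateTile (aOf n c, YOf n c) (T1 n)
      else translateTile (aOf n c, YOf n c + 1) (T2 n)

lemma cellTile_G {n : ℕ} {c : Cell} (h1 : c.1 + ((n:ℤ)-2)*c.2 ≤ -1)
    (h2 : eOf n c - (n:ℤ) + 2 ≤ c.1) :
    cellTile n c = translateTile (eOf n c - (n:ℤ) + 2, 2*(c.2/2)) (T3 n) := by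
  unfold cellTile; rw [if_pos h1, if_pos h2]

lemma cellTile_W3a {n : ℕ} {c : Cell} (h1 : c.1 + ((n:ℤ)-2)*c.2 ≤ -1)
    (h2 : ¬ (eOf n c - (n:ℤ) + 2 ≤ c.1)) (h3 : c.2 % 2 = 0)
    (h4 : ¬ (c.1 = x0Of n c + (n:ℤ) - 1)) :
    cellTile n c = translateTile (x0Of n c, 2*(c.2/2)) (T3 n) := by
  unfold cellTile; rw [if_pos h1, if_neg h2, if_pos h3, if_neg h4]

lemma cellTile_W4a {n : ℕ} {c : Cell} (h1 : c.1 + ((n:ℤ)-2)*c.2 ≤ -1)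
    (h2 : ¬ (eOf n c - (n:ℤ) + 2 ≤ c.1)) (h3 : c.2 % 2 = 0)
    (h4 : c.1 = x0Of n c + (n:ℤ) - 1) :
    cellTile n c = translateTile (x0Of n c + 1, 2*(c.2/2)) (T4 n) := by
  unfold cellTile; rw [if_pos h1, if_neg h2, if_pos h3, if_pos h4]

lemma cellTile_W3b {n : ℕ} {c : Cell} (h1 : c.1 + ((n:ℤ)-2)*c.2 ≤ -1)
    (h2 : ¬ (eOf n c - (n:ℤ) + 2 ≤ c.1)) (h3 : ¬ (c.2 % 2 = 0))
    (h4 : c.1 = x0Of n c) :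
    cellTile n c = translateTile (x0Of n c, 2*(c.2/2)) (T3 n) := by
  unfold cellTile; rw [if_pos h1, if_neg h2, if_neg h3, if_pos h4]

lemma cellTile_W4b {n : ℕ} {c : Cell} (h1 : c.1 + ((n:ℤ)-2)*c.2 ≤ -1)
    (h2 : ¬ (eOf n c - (n:ℤ) + 2 ≤ c.1)) (h3 : ¬ (c.2 % 2 = 0))
    (h4 : ¬ (c.1 = x0Of n c)) :
    cellTile n c = translateTile (x0Of n c + 1, 2*(c.2/2)) (T4 n) := by
  unfold cellTile; rw [if_pos h1, if_neg h2, if_neg h3, if_neg h4]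

lemma cellTile_S1a {n : ℕ} {c : Cell} (h1 : ¬ (c.1 + ((n:ℤ)-2)*c.2 ≤ -1))
    (h2 : c.1 = aOf n c) (h3 : ¬ (sOf n c = (n:ℤ) - 1)) :
    cellTile n c = translateTile (aOf n c, YOf n c) (T1 n) := by
  unfold cellTile; rw [if_neg h1, if_pos h2, if_neg h3]

lemma cellTile_S2a {n : ℕ} {c : Cell} (h1 : ¬ (c.1 + ((n:ℤ)-2)*c.2 ≤ -1))
    (h2 : c.1 = aOf n c) (h3 : sOf n c = (n:ℤ) - 1) :
    cellTile n c = translateTile (aOf n c, YOf n c + 1) (T2 n) := by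
  unfold cellTile; rw [if_neg h1, if_pos h2, if_pos h3]

lemma cellTile_S1b {n : ℕ} {c : Cell} (h1 : ¬ (c.1 + ((n:ℤ)-2)*c.2 ≤ -1))
    (h2 : ¬ (c.1 = aOf n c)) (h3 : sOf n c = 0) :
    cellTile n c = translateTile (aOf n c, YOf n c) (T1 n) := by
  unfold cellTile; rw [if_neg h1, if_neg h2, if_pos h3]

lemma cellTile_S2b {n : ℕ} {c : Cell} (h1 : ¬ (c.1 + ((n:ℤ)-2)*c.2 ≤ -1))
    (h2 : ¬ (c.1 = aOf n c)) (h3 : ¬ (sOf n c = 0)) :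
    cellTile n c = translateTile (aOf n c, YOf n c + 1) (T2 n) := by
  unfold cellTile; rw [if_neg h1, if_neg h2, if_neg h3]

lemma tt_congr {t : Set Cell} {a b c d : ℤ} (h1 : a = c) (h2 : b = d) :
    translateTile (a, b) t = translateTile (c, d) t := by rw [h1, h2]
-- Spec for the corner staircase tile G j = T3 translated to (-2(n-2)j - n + 1, 2j).
lemma spec_G {n : ℕ} (hn4 : 4 ≤ n) {j : ℤ} (hj : 0 ≤ j) :
    ∀ z ∈ translateTile (-2*((n:ℤ)-2)*j - (n:ℤ) + 1, 2*j) (T3 n),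
      (z.1 ≤ -1 ∧ 0 ≤ z.2) ∧
      cellTile n z = translateTile (-2*((n:ℤ)-2)*j - (n:ℤ) + 1, 2*j) (T3 n) := by
  have hN : (4:ℤ) ≤ (n:ℤ) := by exact_mod_cast hn4
  have hP : 0 ≤ ((n:ℤ)-2)*j := mul_nonneg (by linarith) hj
  intro z hz
  rw [mem_tT3] at hz
  dsimp only at hz
  rcases hz with ⟨hy, hx1, hx2⟩ | ⟨hx, hy⟩
  · -- body cell: z.2 = 2j, g ≤ z.1 ≤ g + n - 2
    have hj2 : z.2 / 2 = j := by omega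
    have he : eOf n z = -2*((n:ℤ)-2)*j - 1 := by unfold eOf; rw [hj2]
    have hprod : ((n:ℤ)-2)*z.2 = 2*(((n:ℤ)-2)*j) := by rw [hy]; ring
    have hwedge : z.1 + ((n:ℤ)-2)*z.2 ≤ -1 := by rw [hprod]; linarith
    have hG : eOf n z - (n:ℤ) + 2 ≤ z.1 := by rw [he]; linarith
    refine ⟨⟨by linarith, by omega⟩, ?_⟩
    rw [cellTile_G hwedge hG, he, hj2]
    exact tt_congr (by ring) (by ring)
  · -- bump cell: z.1 = g, z.2 = 2j + 1
    have hj2 : z.2 / 2 = j := by omega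
    have he : eOf n z = -2*((n:ℤ)-2)*j - 1 := by unfold eOf; rw [hj2]
    have hprod : ((n:ℤ)-2)*z.2 = 2*(((n:ℤ)-2)*j) + ((n:ℤ)-2) := by rw [hy]; ring
    have hwedge : z.1 + ((n:ℤ)-2)*z.2 ≤ -1 := by rw [hprod]; linarith
    have hG : eOf n z - (n:ℤ) + 2 ≤ z.1 := by rw [he]; linarith
    refine ⟨⟨by linarith, by omega⟩, ?_⟩
    rw [cellTile_G hwedge hG, he, hj2]
    exact tt_congr (by ring) (by ring)
-- Spec for wedge tile W3 j m (horizontal T3 inside a 2×n block of the wedge).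
lemma spec_W3 {n : ℕ} (hn4 : 4 ≤ n) {j m : ℤ} (hj : 0 ≤ j) (hm : 0 ≤ m) :
    ∀ z ∈ translateTile (-2*((n:ℤ)-2)*j - (n:ℤ) + 1 - (n:ℤ)*(m+1), 2*j) (T3 n),
      (z.1 ≤ -1 ∧ 0 ≤ z.2) ∧
      cellTile n z = translateTile (-2*((n:ℤ)-2)*j - (n:ℤ) + 1 - (n:ℤ)*(m+1), 2*j) (T3 n) := by
  have hN : (4:ℤ) ≤ (n:ℤ) := by exact_mod_cast hn4
  have hP : 0 ≤ ((n:ℤ)-2)*j := mul_nonneg (by linarith) hj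
  have hM : 0 ≤ (n:ℤ)*m := mul_nonneg (by linarith) hm
  intro z hz
  rw [mem_tT3] at hz
  dsimp only at hz
  rcases hz with ⟨hy, hx1, hx2⟩ | ⟨hx, hy⟩
  · have hj2 : z.2 / 2 = j := by omega
    have hpar : z.2 % 2 = 0 := by omega
    have he : eOf n z = -2*((n:ℤ)-2)*j - 1 := by unfold eOf; rw [hj2]
    have hprod : ((n:ℤ)-2)*z.2 = 2*(((n:ℤ)-2)*j) := by rw [hy]; ring
    have hwedge : z.1 + ((n:ℤ)-2)*z.2 ≤ -1 := by rw [hprod]; linarith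
    have hGfail : ¬ (eOf n z - (n:ℤ) + 2 ≤ z.1) := by rw [he]; intro hcon; linarith
    have hmval : mOf n z = m := by
      unfold mOf; rw [he]
      have harg : -2*((n:ℤ)-2)*j - 1 + 1 - (n:ℤ) - z.1
          = (n:ℤ)*m + (-2*((n:ℤ)-2)*j - (n:ℤ) - z.1 - (n:ℤ)*m) := by ring
      rw [harg, (sqt_euclid (by linarith) (by linarith) (by linarith)).1]
    have hx0 : x0Of n z = -2*((n:ℤ)-2)*j - (n:ℤ) + 1 - (n:ℤ)*(m+1) := by
      unfold x0Of; rw [he, hmval]; ring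
    have hne : ¬ (z.1 = x0Of n z + (n:ℤ) - 1) := by rw [hx0]; intro hcon; linarith
    refine ⟨⟨by linarith, by omega⟩, ?_⟩
    rw [cellTile_W3a hwedge hGfail hpar hne, hx0, hj2]
  · have hj2 : z.2 / 2 = j := by omega
    have hpar : ¬ (z.2 % 2 = 0) := by omega
    have he : eOf n z = -2*((n:ℤ)-2)*j - 1 := by unfold eOf; rw [hj2]
    have hprod : ((n:ℤ)-2)*z.2 = 2*(((n:ℤ)-2)*j) + ((n:ℤ)-2) := by rw [hy]; ring
    have hwedge : z.1 + ((n:ℤ)-2)*z.2 ≤ -1 := by rw [hprod]; linarith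
    have hGfail : ¬ (eOf n z - (n:ℤ) + 2 ≤ z.1) := by rw [he]; intro hcon; linarith
    have hmval : mOf n z = m := by
      unfold mOf; rw [he]
      have harg : -2*((n:ℤ)-2)*j - 1 + 1 - (n:ℤ) - z.1
          = (n:ℤ)*m + (-2*((n:ℤ)-2)*j - (n:ℤ) - z.1 - (n:ℤ)*m) := by ring
      rw [harg, (sqt_euclid (by linarith) (by linarith) (by linarith)).1]
    have hx0 : x0Of n z = -2*((n:ℤ)-2)*j - (n:ℤ) + 1 - (n:ℤ)*(m+1) := by
      unfold x0Of; rw [he, hmval]; ring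
    have h4 : z.1 = x0Of n z := by rw [hx0]; exact hx
    refine ⟨⟨by linarith, by omega⟩, ?_⟩
    rw [cellTile_W3b hwedge hGfail hpar h4, hx0, hj2]

-- Spec for wedge tile W4 j m.
lemma spec_W4 {n : ℕ} (hn4 : 4 ≤ n) {j m : ℤ} (hj : 0 ≤ j) (hm : 0 ≤ m) :
    ∀ z ∈ translateTile (-2*((n:ℤ)-2)*j - (n:ℤ) + 2 - (n:ℤ)*(m+1), 2*j) (T4 n),
      (z.1 ≤ -1 ∧ 0 ≤ z.2) ∧
      cellTile n z = translateTile (-2*((n:ℤ)-2)*j - (n:ℤ) + 2 - (n:ℤ)*(m+1), 2*j) (T4 n) := by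
  have hN : (4:ℤ) ≤ (n:ℤ) := by exact_mod_cast hn4
  have hP : 0 ≤ ((n:ℤ)-2)*j := mul_nonneg (by linarith) hj
  have hM : 0 ≤ (n:ℤ)*m := mul_nonneg (by linarith) hm
  intro z hz
  rw [mem_tT4] at hz
  dsimp only at hz
  rcases hz with ⟨hy, hx1, hx2⟩ | ⟨hx, hy⟩
  · have hj2 : z.2 / 2 = j := by omega
    have hpar : ¬ (z.2 % 2 = 0) := by omega
    have he : eOf n z = -2*((n:ℤ)-2)*j - 1 := by unfold eOf; rw [hj2]
    have hprod : ((n:ℤ)-2)*z.2 = 2*(((n:ℤ)-2)*j) + ((n:ℤ)-2) := by rw [hy]; ring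
    have hwedge : z.1 + ((n:ℤ)-2)*z.2 ≤ -1 := by rw [hprod]; linarith
    have hGfail : ¬ (eOf n z - (n:ℤ) + 2 ≤ z.1) := by rw [he]; intro hcon; linarith
    have hmval : mOf n z = m := by
      unfold mOf; rw [he]
      have harg : -2*((n:ℤ)-2)*j - 1 + 1 - (n:ℤ) - z.1
          = (n:ℤ)*m + (-2*((n:ℤ)-2)*j - (n:ℤ) - z.1 - (n:ℤ)*m) := by ring
      rw [harg, (sqt_euclid (by linarith) (by linarith) (by linarith)).1]
    have hx0 : x0Of n z = -2*((n:ℤ)-2)*j - (n:ℤ) + 1 - (n:ℤ)*(m+1) := by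
      unfold x0Of; rw [he, hmval]; ring
    have h4 : ¬ (z.1 = x0Of n z) := by rw [hx0]; intro hcon; linarith
    refine ⟨⟨by linarith, by omega⟩, ?_⟩
    rw [cellTile_W4b hwedge hGfail hpar h4, hx0, hj2]
    exact tt_congr (by ring) rfl
  · have hj2 : z.2 / 2 = j := by omega
    have hpar : z.2 % 2 = 0 := by omega
    have he : eOf n z = -2*((n:ℤ)-2)*j - 1 := by unfold eOf; rw [hj2]
    have hprod : ((n:ℤ)-2)*z.2 = 2*(((n:ℤ)-2)*j) := by rw [hy]; ring
    have hwedge : z.1 + ((n:ℤ)-2)*z.2 ≤ -1 := by rw [hprod]; linarith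
    have hGfail : ¬ (eOf n z - (n:ℤ) + 2 ≤ z.1) := by rw [he]; intro hcon; linarith
    have hmval : mOf n z = m := by
      unfold mOf; rw [he]
      have harg : -2*((n:ℤ)-2)*j - 1 + 1 - (n:ℤ) - z.1
          = (n:ℤ)*m + (-2*((n:ℤ)-2)*j - (n:ℤ) - z.1 - (n:ℤ)*m) := by ring
      rw [harg, (sqt_euclid (by linarith) (by linarith) (by linarith)).1]
    have hx0 : x0Of n z = -2*((n:ℤ)-2)*j - (n:ℤ) + 1 - (n:ℤ)*(m+1) := by
      unfold x0Of; rw [he, hmval]; ring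
    have h4 : z.1 = x0Of n z + (n:ℤ) - 1 := by rw [hx0, hx]; ring
    refine ⟨⟨by linarith, by omega⟩, ?_⟩
    rw [cellTile_W4a hwedge hGfail hpar h4, hx0, hj2]
    exact tt_congr (by ring) rfl
-- Spec for strip tile S1 k p q (vertical T1).
lemma spec_S1 {n : ℕ} (hn4 : 4 ≤ n) {k p q : ℤ} (hk : 0 ≤ k) (hp : 0 ≤ p) (hq : 0 ≤ q)
    (hpn : 2*(p+1) ≤ (n:ℤ)-2) :
    ∀ z ∈ translateTile (-((n:ℤ)-2)*k - 2*(p+1), k+1+(n:ℤ)*q) (T1 n),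
      (z.1 ≤ -1 ∧ 0 ≤ z.2) ∧
      cellTile n z = translateTile (-((n:ℤ)-2)*k - 2*(p+1), k+1+(n:ℤ)*q) (T1 n) := by
  have hN : (4:ℤ) ≤ (n:ℤ) := by exact_mod_cast hn4
  have hK : 0 ≤ ((n:ℤ)-2)*k := mul_nonneg (by linarith) hk
  have hQ : 0 ≤ (n:ℤ)*q := mul_nonneg (by linarith) hq
  have hKQ : 0 ≤ ((n:ℤ)-2)*((n:ℤ)*q) := mul_nonneg (by linarith) hQ
  intro z hz
  rw [mem_tT1] at hz
  dsimp only at hz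
  rcases hz with ⟨hx, hy1, hy2⟩ | ⟨hx, hy⟩
  · have hmul : ((n:ℤ)-2)*(k+1+(n:ℤ)*q) ≤ ((n:ℤ)-2)*z.2 :=
      mul_le_mul_of_nonneg_left hy1 (by linarith)
    have hexp : ((n:ℤ)-2)*(k+1+(n:ℤ)*q)
        = ((n:ℤ)-2)*k + ((n:ℤ)-2) + ((n:ℤ)-2)*((n:ℤ)*q) := by ring
    have hstrip : ¬ (z.1 + ((n:ℤ)-2)*z.2 ≤ -1) := by
      rw [hexp] at hmul; intro hcon; linarith
    have harg : -z.1 - 1 = ((n:ℤ)-2)*k + (2*p+1) := by rw [hx]; ring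
    have hek := sqt_euclid (D := (n:ℤ)-2) (q := k) (r := 2*p+1)
      (by linarith) (by linarith) (by linarith)
    have hkval : kOf n z = k := by unfold kOf; rw [harg, hek.1]
    have hpval : pOf n z = p := by unfold pOf; rw [harg, hek.2]; omega
    have haval : aOf n z = -((n:ℤ)-2)*k - 2*(p+1) := by unfold aOf; rw [hkval, hpval]
    have harg2 : z.2 - (kOf n z + 1) = (n:ℤ)*q + (z.2 - (k+1+(n:ℤ)*q)) := by rw [hkval]; ring
    have hek2 := sqt_euclid (D := (n:ℤ)) (q := q) (r := z.2 - (k+1+(n:ℤ)*q))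
      (by linarith) (by linarith) (by linarith)
    have hqval : qOf n z = q := by unfold qOf; rw [harg2, hek2.1]
    have hYval : YOf n z = k+1+(n:ℤ)*q := by unfold YOf; rw [hkval, hqval]
    have hsval : sOf n z = z.2 - (k+1+(n:ℤ)*q) := by unfold sOf; rw [harg2, hek2.2]
    have h2 : z.1 = aOf n z := by rw [haval]; exact hx
    have h3 : ¬ (sOf n z = (n:ℤ)-1) := by rw [hsval]; intro hcon; linarith
    refine ⟨⟨by linarith, by linarith⟩, ?_⟩
    rw [cellTile_S1a hstrip h2 h3, haval, hYval]
  · have hexp : ((n:ℤ)-2)*z.2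
        = ((n:ℤ)-2)*k + ((n:ℤ)-2) + ((n:ℤ)-2)*((n:ℤ)*q) := by rw [hy]; ring
    have hstrip : ¬ (z.1 + ((n:ℤ)-2)*z.2 ≤ -1) := by rw [hexp]; intro hcon; linarith
    have harg : -z.1 - 1 = ((n:ℤ)-2)*k + (2*p) := by rw [hx]; ring
    have hek := sqt_euclid (D := (n:ℤ)-2) (q := k) (r := 2*p)
      (by linarith) (by linarith) (by linarith)
    have hkval : kOf n z = k := by unfold kOf; rw [harg, hek.1]
    have hpval : pOf n z = p := by unfold pOf; rw [harg, hek.2]; omega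
    have haval : aOf n z = -((n:ℤ)-2)*k - 2*(p+1) := by unfold aOf; rw [hkval, hpval]
    have harg2 : z.2 - (kOf n z + 1) = (n:ℤ)*q + 0 := by rw [hkval, hy]; ring
    have hek2 := sqt_euclid (D := (n:ℤ)) (q := q) (r := (0:ℤ))
      (by linarith) (by linarith) (by linarith)
    have hqval : qOf n z = q := by unfold qOf; rw [harg2, hek2.1]
    have hYval : YOf n z = k+1+(n:ℤ)*q := by unfold YOf; rw [hkval, hqval]
    have hsval : sOf n z = 0 := by unfold sOf; rw [harg2, hek2.2]
    have h2 : ¬ (z.1 = aOf n z) := by rw [haval, hx]; intro hcon; linarith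
    refine ⟨⟨by linarith, by linarith⟩, ?_⟩
    rw [cellTile_S1b hstrip h2 hsval, haval, hYval]

-- Spec for strip tile S2 k p q (vertical T2).
lemma spec_S2 {n : ℕ} (hn4 : 4 ≤ n) {k p q : ℤ} (hk : 0 ≤ k) (hp : 0 ≤ p) (hq : 0 ≤ q)
    (hpn : 2*(p+1) ≤ (n:ℤ)-2) :
    ∀ z ∈ translateTile (-((n:ℤ)-2)*k - 2*(p+1), k+2+(n:ℤ)*q) (T2 n),
      (z.1 ≤ -1 ∧ 0 ≤ z.2) ∧
      cellTile n z = translateTile (-((n:ℤ)-2)*k - 2*(p+1), k+2+(n:ℤ)*q) (T2 n) := by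
  have hN : (4:ℤ) ≤ (n:ℤ) := by exact_mod_cast hn4
  have hK : 0 ≤ ((n:ℤ)-2)*k := mul_nonneg (by linarith) hk
  have hQ : 0 ≤ (n:ℤ)*q := mul_nonneg (by linarith) hq
  have hKQ : 0 ≤ ((n:ℤ)-2)*((n:ℤ)*q) := mul_nonneg (by linarith) hQ
  intro z hz
  rw [mem_tT2] at hz
  dsimp only at hz
  rcases hz with ⟨hx, hy1, hy2⟩ | ⟨hx, hy⟩
  · have hmul : ((n:ℤ)-2)*(k+2+(n:ℤ)*q) ≤ ((n:ℤ)-2)*z.2 :=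
      mul_le_mul_of_nonneg_left hy1 (by linarith)
    have hexp : ((n:ℤ)-2)*(k+2+(n:ℤ)*q)
        = ((n:ℤ)-2)*k + 2*((n:ℤ)-2) + ((n:ℤ)-2)*((n:ℤ)*q) := by ring
    have hstrip : ¬ (z.1 + ((n:ℤ)-2)*z.2 ≤ -1) := by
      rw [hexp] at hmul; intro hcon; linarith
    have harg : -z.1 - 1 = ((n:ℤ)-2)*k + (2*p) := by rw [hx]; ring
    have hek := sqt_euclid (D := (n:ℤ)-2) (q := k) (r := 2*p)
      (by linarith) (by linarith) (by linarith)
    have hkval : kOf n z = k := by unfold kOf; rw [harg, hek.1]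
    have hpval : pOf n z = p := by unfold pOf; rw [harg, hek.2]; omega
    have haval : aOf n z = -((n:ℤ)-2)*k - 2*(p+1) := by unfold aOf; rw [hkval, hpval]
    have harg2 : z.2 - (kOf n z + 1) = (n:ℤ)*q + (z.2 - (k+1+(n:ℤ)*q)) := by rw [hkval]; ring
    have hek2 := sqt_euclid (D := (n:ℤ)) (q := q) (r := z.2 - (k+1+(n:ℤ)*q))
      (by linarith) (by linarith) (by linarith)
    have hqval : qOf n z = q := by unfold qOf; rw [harg2, hek2.1]
    have hYval : YOf n z = k+1+(n:ℤ)*q := by unfold YOf; rw [hkval, hqval]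
    have hsval : sOf n z = z.2 - (k+1+(n:ℤ)*q) := by unfold sOf; rw [harg2, hek2.2]
    have h2 : ¬ (z.1 = aOf n z) := by rw [haval, hx]; intro hcon; linarith
    have h3 : ¬ (sOf n z = 0) := by rw [hsval]; intro hcon; linarith
    refine ⟨⟨by linarith, by linarith⟩, ?_⟩
    rw [cellTile_S2b hstrip h2 h3, haval, hYval]
    exact tt_congr rfl (by ring)
  · have hexp : ((n:ℤ)-2)*z.2
        = ((n:ℤ)-2)*k + ((n:ℤ)-2)*((n:ℤ)*q) + ((n:ℤ)-2)*(n:ℤ) := by rw [hy]; ring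
    have hNN : 0 ≤ ((n:ℤ)-2)*(n:ℤ) := mul_nonneg (by linarith) (by linarith)
    have hNN2 : ((n:ℤ)-2)*1 ≤ ((n:ℤ)-2)*(n:ℤ) :=
      mul_le_mul_of_nonneg_left (by linarith) (by linarith)
    have hstrip : ¬ (z.1 + ((n:ℤ)-2)*z.2 ≤ -1) := by rw [hexp]; intro hcon; linarith
    have harg : -z.1 - 1 = ((n:ℤ)-2)*k + (2*p+1) := by rw [hx]; ring
    have hek := sqt_euclid (D := (n:ℤ)-2) (q := k) (r := 2*p+1)
      (by linarith) (by linarith) (by linarith)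
    have hkval : kOf n z = k := by unfold kOf; rw [harg, hek.1]
    have hpval : pOf n z = p := by unfold pOf; rw [harg, hek.2]; omega
    have haval : aOf n z = -((n:ℤ)-2)*k - 2*(p+1) := by unfold aOf; rw [hkval, hpval]
    have harg2 : z.2 - (kOf n z + 1) = (n:ℤ)*q + ((n:ℤ)-1) := by rw [hkval, hy]; ring
    have hek2 := sqt_euclid (D := (n:ℤ)) (q := q) (r := (n:ℤ)-1)
      (by linarith) (by linarith) (by linarith)
    have hqval : qOf n z = q := by unfold qOf; rw [harg2, hek2.1]
    have hYval : YOf n z = k+1+(n:ℤ)*q := by unfold YOf; rw [hkval, hqval]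
    have hsval : sOf n z = (n:ℤ)-1 := by unfold sOf; rw [harg2, hek2.2]
    have h2 : z.1 = aOf n z := by rw [haval]; exact hx
    refine ⟨⟨by linarith, by linarith⟩, ?_⟩
    rw [cellTile_S2a hstrip h2 hsval, haval, hYval]
    exact tt_congr rfl (by ring)
lemma sqt_T1_mem {n : ℕ} : T1 n ∈ Tset n := by simp [Tset]
lemma sqt_T2_mem {n : ℕ} : T2 n ∈ Tset n := by simp [Tset]
lemma sqt_T3_mem {n : ℕ} : T3 n ∈ Tset n := by simp [Tset]
lemma sqt_T4_mem {n : ℕ} : T4 n ∈ Tset n := by simp [Tset]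

lemma sqt_conclude {n : ℕ} {c : Cell} {v : Cell} {t : Set Cell} (ht : t ∈ Tset n)
    (hspec : ∀ z ∈ translateTile v t,
      (z.1 ≤ -1 ∧ 0 ≤ z.2) ∧ cellTile n z = translateTile v t)
    (hmem : c ∈ translateTile v t) :
    c ∈ cellTile n c ∧
    (∃ t' ∈ Tset n, ∃ w : Cell, cellTile n c = translateTile w t') ∧
    ∀ z ∈ cellTile n c, (z.1 ≤ -1 ∧ 0 ≤ z.2) ∧ cellTile n z = cellTile n c := by
  have hc := (hspec c hmem).2
  refine ⟨by rw [hc]; exact hmem, ⟨t, ht, v, hc⟩, ?_⟩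
  intro z hz
  rw [hc] at hz
  exact ⟨(hspec z hz).1, by rw [(hspec z hz).2, hc]⟩

lemma cellTile_spec {n : ℕ} (hn4 : 4 ≤ n) (hne : Even n) {c : Cell}
    (hc1 : c.1 ≤ -1) (hc2 : 0 ≤ c.2) :
    c ∈ cellTile n c ∧
    (∃ t' ∈ Tset n, ∃ w : Cell, cellTile n c = translateTile w t') ∧
    ∀ z ∈ cellTile n c, (z.1 ≤ -1 ∧ 0 ≤ z.2) ∧ cellTile n z = cellTile n c := by
  have hN : (4:ℤ) ≤ (n:ℤ) := by exact_mod_cast hn4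
  by_cases hw : c.1 + ((n:ℤ)-2)*c.2 ≤ -1
  · -- wedge region
    obtain ⟨j, r, hj, hr0, hr1, hyr⟩ :
        ∃ j r, 0 ≤ j ∧ 0 ≤ r ∧ r < 2 ∧ c.2 = 2*j + r :=
      ⟨c.2/2, c.2 % 2, by omega, by omega, by omega, by omega⟩
    have hprod : ((n:ℤ)-2)*c.2 = 2*(((n:ℤ)-2)*j) + ((n:ℤ)-2)*r := by rw [hyr]; ring
    rw [hprod] at hw
    have hP : 0 ≤ ((n:ℤ)-2)*j := mul_nonneg (by linarith) hj
    by_cases hG : -2*((n:ℤ)-2)*j - (n:ℤ) + 1 ≤ c.1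
    · -- staircase tile G j
      refine sqt_conclude sqt_T3_mem (spec_G hn4 hj) ?_
      rw [mem_tT3]; dsimp only
      rcases (by omega : r = 0 ∨ r = 1) with rfl | rfl
      · left
        refine ⟨by omega, hG, ?_⟩
        have : ((n:ℤ)-2)*0 = 0 := by ring
        linarith
      · right
        have h1 : ((n:ℤ)-2)*1 = (n:ℤ)-2 := by ring
        exact ⟨by linarith, by omega⟩
    · -- inner wedge tiles W3/W4
      have hd0 : 0 ≤ -2*((n:ℤ)-2)*j - (n:ℤ) - c.1 := by
        push_neg at hG; linarith
      obtain ⟨m, ρ, hm, hρ0, hρ1, hdm⟩ :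
          ∃ m ρ, 0 ≤ m ∧ 0 ≤ ρ ∧ ρ < (n:ℤ) ∧
            -2*((n:ℤ)-2)*j - (n:ℤ) - c.1 = (n:ℤ)*m + ρ :=
        ⟨(-2*((n:ℤ)-2)*j - (n:ℤ) - c.1) / (n:ℤ), (-2*((n:ℤ)-2)*j - (n:ℤ) - c.1) % (n:ℤ),
          Int.ediv_nonneg hd0 (by linarith), Int.emod_nonneg _ (by linarith),
          Int.emod_lt_of_pos _ (by linarith), (Int.mul_ediv_add_emod _ _).symm⟩
      rcases (by omega : r = 0 ∨ r = 1) with rfl | rfl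
      · have h0 : ((n:ℤ)-2)*0 = 0 := by ring
        rcases (by omega : ρ = 0 ∨ 1 ≤ ρ) with rfl | hρ
        · -- W4 bump
          refine sqt_conclude sqt_T4_mem (spec_W4 hn4 hj hm) ?_
          rw [mem_tT4]; dsimp only
          right
          exact ⟨by linarith, by omega⟩
        · -- W3 body
          refine sqt_conclude sqt_T3_mem (spec_W3 hn4 hj hm) ?_
          rw [mem_tT3]; dsimp only
          left
          exact ⟨by omega, by linarith, by linarith⟩
      · have h1 : ((n:ℤ)-2)*1 = (n:ℤ)-2 := by ring
        rcases (by omega : ρ = (n:ℤ)-1 ∨ ρ ≤ (n:ℤ)-2) with hρ | hρ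
        · -- W3 bump
          refine sqt_conclude sqt_T3_mem (spec_W3 hn4 hj hm) ?_
          rw [mem_tT3]; dsimp only
          right
          exact ⟨by linarith, by omega⟩
        · -- W4 body
          refine sqt_conclude sqt_T4_mem (spec_W4 hn4 hj hm) ?_
          rw [mem_tT4]; dsimp only
          left
          exact ⟨by omega, by linarith, by linarith⟩
  · -- strip region
    push_neg at hw
    obtain ⟨h2, hh⟩ := hne
    have hNe : (n:ℤ) = (h2:ℤ) + (h2:ℤ) := by exact_mod_cast hh
    have hu0 : 0 ≤ -c.1 - 1 := by linarith
    obtain ⟨k, cc, hk, hcc0, hcc1, hu⟩ :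
        ∃ k cc, 0 ≤ k ∧ 0 ≤ cc ∧ cc < (n:ℤ)-2 ∧ -c.1 - 1 = ((n:ℤ)-2)*k + cc :=
      ⟨(-c.1 - 1) / ((n:ℤ)-2), (-c.1 - 1) % ((n:ℤ)-2),
        Int.ediv_nonneg hu0 (by linarith), Int.emod_nonneg _ (by linarith),
        Int.emod_lt_of_pos _ (by linarith), (Int.mul_ediv_add_emod _ _).symm⟩
    obtain ⟨p, hp, hcp⟩ : ∃ p, 0 ≤ p ∧ (cc = 2*p ∨ cc = 2*p+1) :=
      ⟨cc/2, by omega, by omega⟩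
    have hpn : 2*(p+1) ≤ (n:ℤ)-2 := by omega
    have hK : 0 ≤ ((n:ℤ)-2)*k := mul_nonneg (by linarith) hk
    have hyk : k+1 ≤ c.2 := by
      by_contra hcon
      push_neg at hcon
      have hmm : ((n:ℤ)-2)*c.2 ≤ ((n:ℤ)-2)*k :=
        mul_le_mul_of_nonneg_left (by omega) (by linarith)
      linarith
    obtain ⟨q, s, hq, hs0, hs1, hws⟩ :
        ∃ q s, 0 ≤ q ∧ 0 ≤ s ∧ s < (n:ℤ) ∧ c.2 - (k+1) = (n:ℤ)*q + s :=
      ⟨(c.2 - (k+1)) / (n:ℤ), (c.2 - (k+1)) % (n:ℤ),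
        Int.ediv_nonneg (by linarith) (by linarith), Int.emod_nonneg _ (by linarith),
        Int.emod_lt_of_pos _ (by linarith), (Int.mul_ediv_add_emod _ _).symm⟩
    rcases hcp with hcp | hcp
    · -- c.1 = a + 1
      rcases (by omega : s = 0 ∨ 1 ≤ s) with rfl | hs
      · -- S1 bump
        refine sqt_conclude sqt_T1_mem (spec_S1 hn4 hk hp hq hpn) ?_
        rw [mem_tT1]; dsimp only
        right
        exact ⟨by linarith, by linarith⟩
      · -- S2 body
        refine sqt_conclude sqt_T2_mem (spec_S2 hn4 hk hp hq hpn) ?_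
        rw [mem_tT2]; dsimp only
        left
        exact ⟨by linarith, by linarith, by linarith⟩
    · -- c.1 = a
      rcases (by omega : s = (n:ℤ)-1 ∨ s ≤ (n:ℤ)-2) with rfl | hs
      · -- S2 bump
        refine sqt_conclude sqt_T2_mem (spec_S2 hn4 hk hp hq hpn) ?_
        rw [mem_tT2]; dsimp only
        right
        exact ⟨by linarith, by linarith⟩
      · -- S1 body
        refine sqt_conclude sqt_T1_mem (spec_S1 hn4 hk hp hq hpn) ?_
        rw [mem_tT1]; dsimp only
        left
        exact ⟨by linarith, by linarith, by linarith⟩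
/-- The tiling of the second quadrant: image of the cell → tile map. -/
def theTiling (n : ℕ) : Set (Set Cell) := cellTile n '' {p : Cell | p.1 ≤ -1 ∧ 0 ≤ p.2}

lemma theTiling_isTiling {n : ℕ} (hn4 : 4 ≤ n) (hne : Even n) :
    IsTiling (Tset n) {p : Cell | p.1 ≤ -1 ∧ 0 ≤ p.2} (theTiling n) := by
  refine ⟨?_, ?_, ?_⟩
  · rintro P ⟨c, hc, rfl⟩
    exact (cellTile_spec hn4 hne hc.1 hc.2).2.1
  · rintro P ⟨c, hc, rfl⟩ Q ⟨c', hc', rfl⟩ hPQ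
    rw [Set.disjoint_left]
    intro z hz1 hz2
    have e1 := ((cellTile_spec hn4 hne hc.1 hc.2).2.2 z hz1).2
    have e2 := ((cellTile_spec hn4 hne hc'.1 hc'.2).2.2 z hz2).2
    exact hPQ (e1.symm.trans e2)
  · ext z
    simp only [Set.mem_sUnion, Set.mem_setOf_eq]
    constructor
    · rintro ⟨P, ⟨c, hc, rfl⟩, hz⟩
      exact ((cellTile_spec hn4 hne hc.1 hc.2).2.2 z hz).1
    · intro hz
      exact ⟨cellTile n z, ⟨z, hz, rfl⟩, (cellTile_spec hn4 hne hz.1 hz.2).1⟩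

lemma eval_A {n : ℕ} (hn4 : 4 ≤ n) :
    cellTile n ((-2:ℤ), (1:ℤ)) = translateTile (-2, 1) (T1 n) := by
  have hN : (4:ℤ) ≤ (n:ℤ) := by exact_mod_cast hn4
  have hpn : 2*((0:ℤ)+1) ≤ (n:ℤ)-2 := by linarith
  have hmem : ((-2:ℤ),(1:ℤ)) ∈
      translateTile (-((n:ℤ)-2)*0 - 2*(0+1), 0+1+(n:ℤ)*0) (T1 n) := by
    rw [mem_tT1]; dsimp only
    left
    refine ⟨by ring, by linarith, by linarith⟩
  rw [(spec_S1 hn4 le_rfl le_rfl le_rfl hpn _ hmem).2]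
  exact tt_congr (by ring) (by ring)

lemma eval_B {n : ℕ} (hn4 : 4 ≤ n) :
    cellTile n ((-2:ℤ), (0:ℤ)) = translateTile (-(n:ℤ)+1, 0) (T3 n) := by
  have hN : (4:ℤ) ≤ (n:ℤ) := by exact_mod_cast hn4
  have hmem : ((-2:ℤ),(0:ℤ)) ∈
      translateTile (-2*((n:ℤ)-2)*0 - (n:ℤ) + 1, 2*0) (T3 n) := by
    rw [mem_tT3]; dsimp only
    left
    refine ⟨by ring, by linarith, by linarith⟩
  rw [(spec_G hn4 le_rfl _ hmem).2]
  exact tt_congr (by ring) (by ring)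

lemma keystep {n : ℕ} (hn4 : 4 ≤ n) (hne : Even n) {P A B : Set Cell} {v : Cell}
    (hA : A ∈ theTiling n) (hB : B ∈ theTiling n) (hPAB : P = A ∪ B)
    (hc0A : ((-2:ℤ),(1:ℤ)) ∈ A) (hv : EvenPt v)
    (hshape : P = rect 2 n v ∨ P = rect n 2 v) : False := by
  have hN : (4:ℤ) ≤ (n:ℤ) := by exact_mod_cast hn4
  obtain ⟨c, hc, rfl⟩ := hA
  have hAeq : cellTile n c = translateTile (-2, 1) (T1 n) :=
    (((cellTile_spec hn4 hne hc.1 hc.2).2.2 _ hc0A).2).symm.trans (eval_A hn4)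
  have hsub : cellTile n c ⊆ P := by rw [hPAB]; exact Set.subset_union_left
  rcases hshape with h2n | hn2
  · have m3 : ((-2:ℤ),(3:ℤ)) ∈ cellTile n c := by
      rw [hAeq, mem_tT1]; dsimp only; left; exact ⟨rfl, by norm_num, by linarith⟩
    have r1 := hsub hc0A
    have r3 := hsub m3
    rw [h2n] at r1 r3
    simp only [rect, Set.mem_setOf_eq] at r1 r3
    omega
  · have mb : ((-1:ℤ),(1:ℤ)) ∈ cellTile n c := by
      rw [hAeq, mem_tT1]; dsimp only; right; exact ⟨by norm_num, rfl⟩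
    have m2 : ((-2:ℤ),(n:ℤ)-1) ∈ cellTile n c := by
      rw [hAeq, mem_tT1]; dsimp only; left; exact ⟨rfl, by linarith, by linarith⟩
    have r1 := hsub hc0A
    have rb := hsub mb
    have r2 := hsub m2
    rw [hn2] at r1 rb r2
    simp only [rect, Set.mem_setOf_eq] at r1 rb r2
    have hv2 : v.2 % 2 = 0 := Int.even_iff.mp hv.2
    have hv1 : v.1 = -2 := by omega
    have hv20 : v.2 = 0 := by omega
    have hP0 : ((-2:ℤ),(0:ℤ)) ∈ P := by
      rw [hn2]; simp only [rect, Set.mem_setOf_eq]; omega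
    have hnotA : ((-2:ℤ),(0:ℤ)) ∉ cellTile n c := by
      rw [hAeq, mem_tT1]; dsimp only
      rintro (⟨h1, h2, h3⟩ | ⟨h1, h2⟩) <;> omega
    have hB0 : ((-2:ℤ),(0:ℤ)) ∈ B := by
      have h := hP0
      rw [hPAB] at h
      rcases h with h | h
      · exact absurd h hnotA
      · exact h
    obtain ⟨c', hc', rfl⟩ := hB
    have hBeq : cellTile n c' = translateTile (-(n:ℤ)+1, 0) (T3 n) :=
      (((cellTile_spec hn4 hne hc'.1 hc'.2).2.2 _ hB0).2).symm.trans (eval_B hn4)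
    have mB : ((-(n:ℤ)+1), (0:ℤ)) ∈ cellTile n c' := by
      rw [hBeq, mem_tT3]; dsimp only; left; exact ⟨rfl, le_refl _, by linarith⟩
    have hPB : ((-(n:ℤ)+1), (0:ℤ)) ∈ P := by rw [hPAB]; exact Or.inr mB
    rw [hn2] at hPB
    simp only [rect, Set.mem_setOf_eq] at hPB
    omega

/-- There is a tiling of the second quadrant by 𝒯_n that does not follow the
rectangular pattern; hence the rigidity of tilings of the first quadrant does
not persist under reflection about the vertical axis. -/
theorem second_quadrant_tiling_not_rect_pattern
    (n : ℕ) (hn4 : 4 ≤ n) (hn : Even n) :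
    ∃ tiling : Set (Set Cell),
      IsTiling (Tset n) {p : Cell | p.1 ≤ -1 ∧ 0 ≤ p.2} tiling ∧
      ¬ FollowsRectPattern n tiling {p : Cell | p.1 ≤ -1 ∧ 0 ≤ p.2} := by
  refine ⟨theTiling n, theTiling_isTiling hn4 hn, ?_⟩
  rintro ⟨parts, hdisj, hcover, hparts⟩
  have hc0R : ((-2:ℤ),(1:ℤ)) ∈ ⋃₀ parts := by
    rw [hcover]
    exact ⟨by norm_num, by norm_num⟩
  obtain ⟨P, hP, hc0P⟩ := hc0R
  obtain ⟨v, hv, hshape, htwo⟩ := hparts P hP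
  obtain ⟨A, hA, B, hB, hAB, hr1, hr2, hPAB⟩ := htwo
  rw [hPAB] at hc0P
  rcases hc0P with h | h
  · exact keystep hn4 hn hA hB hPAB h hv hshape
  · exact keystep hn4 hn hB hA (by rw [hPAB, Set.union_comm]) h hv hshape
end
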